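/- arXiv:1701.06709 — 4 statements merged into one kernel-verified Lean document; each statement's English description precedes it below -/
import Mathlib

section
/- Under the isomorphism ρ : B → M₂(ℂ) given by w + x·i + y·j + z·ij ↦ [[w - x, y - z], [y + z, w + x]], the Macfarlane involution † corresponds to the conjugate transpose: ρ(q†) = conjugate transpose of ρ(q) for all q ∈ B. -/
open Quaternion Matrix

/-- The representation `ρ : (1,1/ℂ) → M₂(ℂ)`. -/
noncomputable def rho (q : ℍ[ℂ,1,1]) : Matrix (Fin 2) (Fin 2) ℂ :=
  !![q.re - q.imI, q.imJ - q.imK; q.imJ + q.imK, q.re + q.imI]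

/-- The Macfarlane involution `†` on `(1,1/ℂ)`. -/
def dag (q : ℍ[ℂ,1,1]) : ℍ[ℂ,1,1] :=
  ⟨starRingEnd ℂ q.re, starRingEnd ℂ q.imI, starRingEnd ℂ q.imJ, -(starRingEnd ℂ q.imK)⟩

/-- Under `ρ`, the Macfarlane involution corresponds to the conjugate transpose. -/
theorem stmt_4 : ∀ q : ℍ[ℂ,1,1], rho (dag q) = (rho q)ᴴ := by
  intro q
  simp [rho, dag, conjTranspose, Matrix.map, transpose]
  ext i j
  fin_cases i <;> fin_cases j <;> simp [map_sub, map_add] <;> ring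
end

section
/- For any u ∈ B with n(u) = 1 and any p ∈ M₊¹ (i.e., p† = p, n(p) = 1, tr(p) > 0), the element u·p·u† again lies in M₊¹: it is †-symmetric, has reduced norm 1, and has positive (real) trace. -/
open Quaternion

/-- The reduced norm on `(1,1/ℂ)`. -/
def qnorm (q : ℍ[ℂ,1,1]) : ℂ := q.re ^ 2 - q.imI ^ 2 - q.imJ ^ 2 + q.imK ^ 2

/-- Membership in the hyperboloid `M₊¹`: `†`-symmetric, norm one, positive (real) trace. -/
def memM1plus (p : ℍ[ℂ,1,1]) : Prop := dag p = p ∧ qnorm p = 1 ∧ 0 < p.re.re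

/-!
`†` is an anti-involution and `n` is multiplicative with `n(x†) = conj (n x)`, which gives the
symmetry and the norm of `u p u†`. For the trace put `v = u (p + 1)`. Since `p` satisfies
`p² = 2 re(p) p - n(p)` and `n(p) = 1`, we get `(p + 1)² = (2 re(p) + 2) p`, hence
`v v† = (2 re(p) + 2) · u p u†` with `2 re(p) + 2 > 0`. On the other hand `re(v v†)` is the sum of the
squared moduli of the coordinates of `v`, which is positive because `n(v) = n(u)(2 re(p) + 2) ≠ 0`.
-/

namespace QuaternionAlgebra

lemma dag_mul (a b : ℍ[ℂ,1,1]) : dag (a * b) = dag b * dag a := by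
  ext <;> simp [dag, re_mul, imI_mul, imJ_mul, imK_mul] <;> ring

lemma dag_dag (a : ℍ[ℂ,1,1]) : dag (dag a) = a := by
  ext <;> simp [dag]

lemma dag_add (a b : ℍ[ℂ,1,1]) : dag (a + b) = dag a + dag b := by
  ext <;> simp [dag, add_comm]

lemma dag_one : dag (1 : ℍ[ℂ,1,1]) = 1 := by
  ext <;> simp [dag]

lemma qnorm_mul (a b : ℍ[ℂ,1,1]) : qnorm (a * b) = qnorm a * qnorm b := by
  simp only [qnorm, re_mul, imI_mul, imJ_mul, imK_mul]
  ring

lemma qnorm_dag (a : ℍ[ℂ,1,1]) : qnorm (dag a) = starRingEnd ℂ (qnorm a) := by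
  simp only [qnorm, dag, map_add, map_sub, map_pow]
  ring

lemma qnorm_add_one (p : ℍ[ℂ,1,1]) : qnorm (p + 1) = qnorm p + 2 * p.re + 1 := by
  simp only [qnorm, re_add, imI_add, imJ_add, imK_add, re_one, imI_one, imJ_one, imK_one]
  ring

lemma ne_zero_of_qnorm_ne_zero {a : ℍ[ℂ,1,1]} (ha : qnorm a ≠ 0) : a ≠ 0 :=
  fun h => ha (by simp [h, qnorm])

lemma mul_self_eq (p : ℍ[ℂ,1,1]) : p * p = ↑(2 * p.re) * p - ↑(qnorm p) := by
  ext <;> simp [qnorm, re_mul, imI_mul, imJ_mul, imK_mul, -coe_sub, -coe_add, -coe_pow] <;> ring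

lemma add_one_mul_self_of_qnorm_eq_one {p : ℍ[ℂ,1,1]} (hp : qnorm p = 1) :
    (p + 1) * (p + 1) = ↑(2 * p.re + 2) * p := by
  rw [add_mul, mul_add, mul_self_eq, hp]
  simp only [coe_add, coe_one, coe_mul, coe_ofNat]
  noncomm_ring

lemma re_mul_dag_self (v : ℍ[ℂ,1,1]) :
    (v * dag v).re = ↑(Complex.normSq v.re + Complex.normSq v.imI + Complex.normSq v.imJ +
      Complex.normSq v.imK) := by
  simp only [re_mul, dag, Complex.ofReal_add, ← Complex.mul_conj]
  ring

lemma re_re_mul_dag_self_pos {v : ℍ[ℂ,1,1]} (hv : v ≠ 0) : 0 < (v * dag v).re.re := by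
  rw [re_mul_dag_self, Complex.ofReal_re]
  contrapose! hv
  have := Complex.normSq_nonneg
  ext <;> simp only [re_zero, imI_zero, imJ_zero, imK_zero, ← Complex.normSq_eq_zero] <;>
    linarith [this v.re, this v.imI, this v.imJ, this v.imK]

lemma re_eq_ofReal_of_dag_eq {p : ℍ[ℂ,1,1]} (hp : dag p = p) : p.re = (p.re.re : ℂ) :=
  (Complex.conj_eq_iff_re.mp (congrArg re hp)).symm

lemma re_re_mul_mul_dag_pos {u p : ℍ[ℂ,1,1]} (hu : qnorm u ≠ 0) (hp : memM1plus p) :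
    0 < (u * p * dag u).re.re := by
  obtain ⟨hp_dag, hp_norm, hp_re⟩ := hp
  set r := p.re.re
  have hr : p.re = r := re_eq_ofReal_of_dag_eq hp_dag
  set v := u * (p + 1)
  have hv : qnorm v ≠ 0 := by
    rw [qnorm_mul, qnorm_add_one, hp_norm, hr]
    exact mul_ne_zero hu (by exact_mod_cast (by linarith : (1 + 2 * r + 1 : ℝ) ≠ 0))
  have key : v * dag v = ↑((2 * r + 2 : ℝ) : ℂ) * (u * p * dag u) := by
    calc v * dag v = u * ((p + 1) * (p + 1)) * dag u := by
          simp only [v, dag_mul, dag_add, dag_one, hp_dag, mul_assoc]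
      _ = u * (↑(2 * p.re + 2) * p) * dag u := by rw [add_one_mul_self_of_qnorm_eq_one hp_norm]
      _ = ↑((2 * r + 2 : ℝ) : ℂ) * (u * p * dag u) := by
          rw [hr, ← mul_assoc, ← coe_commutes]
          push_cast
          simp only [mul_assoc]
  have h := re_re_mul_dag_self_pos (ne_zero_of_qnorm_ne_zero hv)
  rw [key, coe_mul_eq_smul, re_smul, smul_eq_mul, Complex.re_ofReal_mul] at h
  exact pos_of_mul_pos_right h (by linarith)

end QuaternionAlgebra

/-- For `u` of norm one and `p ∈ M₊¹`, the element `u·p·u†` again lies in `M₊¹`. -/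
theorem stmt_7 : ∀ u p : ℍ[ℂ,1,1], qnorm u = 1 → memM1plus p →
    memM1plus (u * p * dag u) := by
  intro u p hu hp
  refine ⟨?_, ?_, QuaternionAlgebra.re_re_mul_mul_dag_pos (by simp [hu]) hp⟩
  · rw [QuaternionAlgebra.dag_mul, QuaternionAlgebra.dag_mul, QuaternionAlgebra.dag_dag, hp.1,
      mul_assoc]
  · rw [QuaternionAlgebra.qnorm_mul, QuaternionAlgebra.qnorm_mul, QuaternionAlgebra.qnorm_dag, hu,
      hp.2.1, map_one, mul_one, mul_one]
end

section
/- For p ∈ M₊¹ and q on the geodesic through 1 and p (i.e., q ∈ M₊¹ with pure part q₀ = λ·p₀ for some λ ∈ ℝ, where q₀ = q - tr(q)/2), the pure part of p·q·p is again a real multiple of p₀. Hence the geodesic g̃(1,p) is invariant under the action q ↦ p·q·p† = p·q·p. -/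
/-!
Write `p = a + u` with `u = p₀`. On the geodesic `q = b + l u`, and since `u² = (u * u).re` is a
scalar, `p q p` lies in the commutative subalgebra spanned by `1` and `u`, with `u`-coefficient
`2ab + l (a² + u²)`. For `p† = p` and `q† = q` the scalars `a`, `b` and `u²` are real
(`u² = p_I² + p_J² - p_K²` with `p_K` purely imaginary), hence so is this coefficient.
-/

open Quaternion

theorem QuaternionAlgebra.im_mul_mul_self_of_im_eq_smul {R : Type*} [CommRing R] {c₁ c₃ : R}
    (p q : ℍ[R,c₁,c₃]) {l : R} (h : q.im = l • p.im) :
    (p * q * p).im = (2 * p.re * q.re + l * (p.re ^ 2 + (p.im * p.im).re)) • p.im := by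
  have hI : q.imI = l * p.imI := congrArg QuaternionAlgebra.imI h
  have hJ : q.imJ = l * p.imJ := congrArg QuaternionAlgebra.imJ h
  have hK : q.imK = l * p.imK := congrArg QuaternionAlgebra.imK h
  ext <;>
    simp only [re_im, imI_im, imJ_im, imK_im, re_mul, imI_mul, imJ_mul, imK_mul, re_smul,
      imI_smul, imJ_smul, imK_smul, smul_eq_mul, hI, hJ, hK, mul_zero, zero_mul, add_zero,
      zero_add] <;>
    ring

theorem ofReal_re_re_of_dag_eq_self {p : ℍ[ℂ,1,1]} (hp : dag p = p) : (p.re.re : ℂ) = p.re :=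
  Complex.conj_eq_iff_re.mp (congrArg QuaternionAlgebra.re hp)

theorem ofReal_re_im_mul_im_of_dag_eq_self {p : ℍ[ℂ,1,1]} (hp : dag p = p) :
    ((p.im * p.im).re.re : ℂ) = (p.im * p.im).re := by
  have hI : starRingEnd ℂ p.imI = p.imI := congrArg QuaternionAlgebra.imI hp
  have hJ : starRingEnd ℂ p.imJ = p.imJ := congrArg QuaternionAlgebra.imJ hp
  have hK : starRingEnd ℂ p.imK = -p.imK :=
    neg_eq_iff_eq_neg.mp (congrArg QuaternionAlgebra.imK hp)
  refine Complex.conj_eq_iff_re.mp ?_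
  simp [QuaternionAlgebra.re_mul, hI, hJ, hK]

/-- If `p, q ∈ M₊¹` and the pure part `q₀` of `q` is a real multiple of `p₀`
(i.e. `q` lies on the geodesic through `1` and `p`), then `p·q·p† = p·q·p` and
its pure part is again a real multiple of `p₀`: the geodesic `g̃(1,p)` is
invariant under the action of `p`. -/
theorem stmt_10 : ∀ p q : ℍ[ℂ,1,1], memM1plus p → memM1plus q →
    (∃ l : ℝ, q.im = (l : ℂ) • p.im) →
    p * q * dag p = p * q * p ∧ ∃ m : ℝ, (p * q * dag p).im = (m : ℂ) • p.im := by
  rintro p q ⟨hp, -, -⟩ ⟨hq, -, -⟩ ⟨l, hl⟩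
  rw [hp, QuaternionAlgebra.im_mul_mul_self_of_im_eq_smul p q hl]
  refine ⟨rfl, 2 * p.re.re * q.re.re + l * (p.re.re ^ 2 + (p.im * p.im).re.re), ?_⟩
  push_cast
  rw [ofReal_re_re_of_dag_eq_self hp, ofReal_re_re_of_dag_eq_self hq,
    ofReal_re_im_mul_im_of_dag_eq_self hp]
end

section
/- Let K = F(√(-d)) with F ⊆ ℝ and a, b, d ∈ F positive, B = (a,b / K), and define the involution † on B by (w + x·i + y·j + z·ij)† = conj(w) + conj(x)·i + conj(y)·j - conj(z)·ij, where conj is the nontrivial K/F-automorphism (induced by √(-d) ↦ -√(-d)). Then under ρ_B : w + x·i + y·j + z·ij ↦ [[w - x√a, y√b - z√(ab)], [y√b + z√(ab), w + x√a]], one has ρ_B(q†) equal to the conjugate transpose of ρ_B(q) for all q ∈ B. -/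
/-!
Since `√a`, `√b` and `√(ab)` are real, conjugating the entries of `ρ_B(q)` amounts to conjugating
the coordinates of `q`; transposing then swaps the two off-diagonal entries, which differ exactly
in the sign of the `ij`-coordinate.
-/

open Quaternion Matrix

/-- The representation `ρ_B : (a,b/K) → M₂(ℂ)` for `K ⊆ ℂ`, with positive real
square roots `√a, √b, √(ab)`. -/
noncomputable def rhoB (K : Subfield ℂ) (a b : ℝ) (c₁ c₂ : K)
    (q : ℍ[K, c₁, c₂]) : Matrix (Fin 2) (Fin 2) ℂ :=
  !![(q.re : ℂ) - (q.imI : ℂ) * (Real.sqrt a : ℂ),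
      (q.imJ : ℂ) * (Real.sqrt b : ℂ) - (q.imK : ℂ) * (Real.sqrt (a * b) : ℂ);
    (q.imJ : ℂ) * (Real.sqrt b : ℂ) + (q.imK : ℂ) * (Real.sqrt (a * b) : ℂ),
      (q.re : ℂ) + (q.imI : ℂ) * (Real.sqrt a : ℂ)]

/-- The involution `†` on `B = (a,b/K)` for a conjugation-closed subfield
`K ⊆ ℂ`: `(w + x·i + y·j + z·ij)† = conj w + conj x · i + conj y · j - conj z · ij`,
where `conj` is complex conjugation restricted to `K` (the nontrivial `K/F`
automorphism). -/
noncomputable def dagB (K : Subfield ℂ) (hconj : ∀ z ∈ K, starRingEnd ℂ z ∈ K) (c₁ c₂ : K)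
    (q : ℍ[K, c₁, c₂]) : ℍ[K, c₁, c₂] :=
  ⟨⟨starRingEnd ℂ q.re, hconj _ q.re.2⟩, ⟨starRingEnd ℂ q.imI, hconj _ q.imI.2⟩,
    ⟨starRingEnd ℂ q.imJ, hconj _ q.imJ.2⟩, -⟨starRingEnd ℂ q.imK, hconj _ q.imK.2⟩⟩

theorem Matrix.conjTranspose_fin_two {α : Type*} [Star α] (p r s t : α) :
    !![p, r; s, t]ᴴ = !![star p, star s; star r, star t] := by
  ext i j
  fin_cases i <;> fin_cases j <;> rfl

theorem rhoB_dagB (K : Subfield ℂ) (hconj : ∀ z ∈ K, starRingEnd ℂ z ∈ K) (a b : ℝ)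
    (c₁ c₂ : K) (q : ℍ[K, c₁, c₂]) :
    rhoB K a b c₁ c₂ (dagB K hconj c₁ c₂ q) = (rhoB K a b c₁ c₂ q)ᴴ := by
  simp only [rhoB, dagB, conjTranspose_fin_two, RCLike.star_def, map_add, map_sub, map_mul,
    Complex.conj_ofReal, NegMemClass.coe_neg, neg_mul, sub_neg_eq_add, ← sub_eq_add_neg]

theorem stmt_19_general (a b : ℝ)
    (K : Subfield ℂ)
    (hconj : ∀ z ∈ K, starRingEnd ℂ z ∈ K)
    (haK : ((a : ℝ) : ℂ) ∈ K) (hbK : ((b : ℝ) : ℂ) ∈ K) :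
    ∀ q : ℍ[K, ⟨(a : ℂ), haK⟩, ⟨(b : ℂ), hbK⟩],
      rhoB K a b _ _ (dagB K hconj _ _ q) = (rhoB K a b _ _ q)ᴴ :=
  rhoB_dagB K hconj a b _ _

/-- For `K = F(√(-d))` with `F ⊆ ℝ` and `a, b, d ∈ F` positive, the involution
`†` on `B = (a,b/K)` corresponds under `ρ_B` to the conjugate transpose. -/
theorem stmt_19 (F : Subfield ℝ) (a b d : ℝ)
    (haF : a ∈ F) (hbF : b ∈ F) (hdF : d ∈ F)
    (ha : 0 < a) (hb : 0 < b) (hd : 0 < d)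
    (K : Subfield ℂ)
    (hK : K = Subfield.closure
      ((Complex.ofRealHom '' (F : Set ℝ)) ∪ {Complex.I * (Real.sqrt d : ℂ)}))
    (hconj : ∀ z ∈ K, starRingEnd ℂ z ∈ K)
    (haK : ((a : ℝ) : ℂ) ∈ K) (hbK : ((b : ℝ) : ℂ) ∈ K) :
    ∀ q : ℍ[K, ⟨(a : ℂ), haK⟩, ⟨(b : ℂ), hbK⟩],
      rhoB K a b _ _ (dagB K hconj _ _ q) = (rhoB K a b _ _ q)ᴴ :=
  stmt_19_general a b K hconj haK hbK
end
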